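/- For any real 3×3 matrix A (the displacement gradient), any point p ∈ ℝ³, any translation t ∈ ℝ³ and any skew-symmetric W, the integral over B_ρ(0) of |p + A·h − (W·h + t)|² dh is minimized exactly when t = p and W = skw A, with minimal value (4πρ⁵/15)·‖sym A‖_F². -/

import Mathlib

open Matrix MeasureTheory

noncomputable def frob {n : ℕ} (A : Matrix (Fin n) (Fin n) ℝ) : ℝ :=
  Real.sqrt ((Aᵀ * A).trace)

noncomputable def mv (Z : Matrix (Fin 3) (Fin 3) ℝ) (h : EuclideanSpace ℝ (Fin 3)) :
    EuclideanSpace ℝ (Fin 3) :=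
  (EuclideanSpace.equiv (Fin 3) ℝ).symm (Z.mulVec (EuclideanSpace.equiv (Fin 3) ℝ h))

/-!
Write the residual as `(p - t) + (A - W) h`. Since `h ↦ -h`, coordinate reflections and coordinate
swaps are isometries preserving the ball, the cross term integrates to zero and the second moments
are `∫ hⱼ hₖ = κ δⱼₖ` with `κ = 4πρ⁵/15`. Hence the integral is
`vol(B_ρ) ‖p - t‖² + κ ‖A - W‖_F²`, and since `sym A` is Frobenius-orthogonal to the skew matrix
`skw A - W`, `‖A - W‖_F² = ‖sym A‖_F² + ‖skw A - W‖_F²`.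
-/

open Metric WithLp

namespace Matrix

variable {n R : Type*} [Fintype n] [CommRing R] [NoZeroDivisors R] [CharZero R]
  {S T : Matrix n n R}

theorem trace_transpose_mul_eq_zero_of_isSymm (hS : S.IsSymm) (hT : Tᵀ = -T) :
    (Sᵀ * T).trace = 0 := by
  refine CharZero.eq_neg_self_iff.mp ?_
  calc (Sᵀ * T).trace = (Sᵀ * T)ᵀ.trace := (trace_transpose _).symm
    _ = -(T * S).trace := by rw [transpose_mul, transpose_transpose, hT, neg_mul, trace_neg]
    _ = -(Sᵀ * T).trace := by rw [trace_mul_comm, hS.eq]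

theorem trace_transpose_mul_self_add_of_isSymm (hS : S.IsSymm) (hT : Tᵀ = -T) :
    ((S + T)ᵀ * (S + T)).trace = (Sᵀ * S).trace + (Tᵀ * T).trace := by
  have hST := trace_transpose_mul_eq_zero_of_isSymm hS hT
  have hTS : (Tᵀ * S).trace = 0 := by
    rw [← trace_transpose, transpose_mul, transpose_transpose, hST]
  simp only [transpose_add, add_mul, mul_add, trace_add, hST, hTS]
  ring

end Matrix

section RealMatrix

variable {m n : Type*} [Fintype m] [Fintype n]

theorem trace_transpose_mul_self_nonneg (X : Matrix m n ℝ) : 0 ≤ (Xᵀ * X).trace := by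
  simpa using (posSemidef_conjTranspose_mul_self X).trace_nonneg

theorem trace_transpose_mul_self_eq_zero_iff {X : Matrix m n ℝ} :
    (Xᵀ * X).trace = 0 ↔ X = 0 := by
  simpa using trace_conjTranspose_mul_self_eq_zero_iff (A := X)

end RealMatrix

theorem frob_sq {n : ℕ} (X : Matrix (Fin n) (Fin n) ℝ) : frob X ^ 2 = (Xᵀ * X).trace :=
  Real.sq_sqrt (trace_transpose_mul_self_nonneg X)

theorem Continuous.integrableOn_ball {X : Type*} [MetricSpace X] [ProperSpace X]
    [MeasurableSpace X] [OpensMeasurableSpace X] {μ : Measure X} [IsFiniteMeasureOnCompacts μ]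
    {f : X → ℝ} (hf : Continuous f) (x : X) (r : ℝ) : IntegrableOn f (ball x r) μ :=
  (hf.continuousOn.integrableOn_compact (isCompact_closedBall x r)).mono_set
    ball_subset_closedBall

section Symmetry

variable {E : Type*} [NormedAddCommGroup E] [InnerProductSpace ℝ E] [FiniteDimensional ℝ E]
  [MeasurableSpace E] [BorelSpace E]

theorem setIntegral_ball_comp_linearIsometryEquiv (e : E ≃ₗᵢ[ℝ] E) (f : E → ℝ) (ρ : ℝ) :
    ∫ h in ball 0 ρ, f (e h) = ∫ h in ball 0 ρ, f h := by
  have hpre : e ⁻¹' ball 0 ρ = ball 0 ρ := by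
    ext h
    simp
  conv_lhs => rw [← hpre]
  exact e.measurePreserving.setIntegral_preimage_emb e.toHomeomorph.measurableEmbedding f _

theorem setIntegral_ball_eq_zero_of_odd (e : E ≃ₗᵢ[ℝ] E) {f : E → ℝ} (hf : ∀ h, f (e h) = -f h)
    (ρ : ℝ) : ∫ h in ball 0 ρ, f h = 0 := by
  have := setIntegral_ball_comp_linearIsometryEquiv e f ρ
  simp only [hf, integral_neg] at this
  linarith

end Symmetry

section Moments

variable {ι : Type*} [Fintype ι]

theorem integral_ball_coord_mul_coord_of_ne {j k : ι} (hjk : j ≠ k) (ρ : ℝ) :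
    ∫ h in ball (0 : EuclideanSpace ℝ ι) ρ, h j * h k = 0 := by
  classical
  let reflect : EuclideanSpace ℝ ι ≃ₗᵢ[ℝ] EuclideanSpace ℝ ι :=
    LinearIsometryEquiv.piLpCongrRight 2
      fun i => if i = j then LinearIsometryEquiv.neg ℝ else LinearIsometryEquiv.refl ℝ ℝ
  refine setIntegral_ball_eq_zero_of_odd reflect (fun h => ?_) ρ
  simp [reflect, hjk.symm]

theorem integral_ball_coord_sq_eq (j k : ι) (ρ : ℝ) :
    ∫ h in ball (0 : EuclideanSpace ℝ ι) ρ, h j ^ 2 =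
      ∫ h in ball (0 : EuclideanSpace ℝ ι) ρ, h k ^ 2 := by
  classical
  rw [← setIntegral_ball_comp_linearIsometryEquiv
    (LinearIsometryEquiv.piLpCongrLeft 2 ℝ ℝ (Equiv.swap j k)) (fun h => h j ^ 2) ρ]
  congr 1
  ext h
  simp [LinearIsometryEquiv.piLpCongrLeft_apply, Equiv.piCongrLeft'_apply]

theorem integral_ball_norm_sq [Nonempty ι] {ρ : ℝ} (hρ : 0 ≤ ρ) :
    ∫ h in ball (0 : EuclideanSpace ℝ ι) ρ, ‖h‖ ^ 2 =
      Fintype.card ι * volume.real (ball (0 : EuclideanSpace ℝ ι) 1) *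
        (ρ ^ (Fintype.card ι + 2) / (Fintype.card ι + 2)) := by
  set n := Fintype.card ι
  have hn : 0 < n := Fintype.card_pos
  have hradial : ∫ y in Set.Ioi (0 : ℝ), y ^ (n - 1) • (Set.Iio ρ).indicator (· ^ 2) y =
      ρ ^ (n + 2) / (n + 2) := by
    have hy (y : ℝ) : y ^ (n - 1) • (Set.Iio ρ).indicator (· ^ 2) y =
        (Set.Iio ρ).indicator (· ^ (n + 1)) y := by
      by_cases hyρ : y ∈ Set.Iio ρ
      · simp only [Set.indicator_of_mem hyρ, smul_eq_mul, ← pow_add]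
        congr 1
        omega
      · simp [Set.indicator_of_notMem hyρ]
    simp_rw [hy]
    rw [setIntegral_indicator measurableSet_Iio, Set.Ioi_inter_Iio,
      ← integral_Ioc_eq_integral_Ioo, ← intervalIntegral.integral_of_le hρ, integral_pow]
    push_cast
    ring
  have hball : ∫ h in ball (0 : EuclideanSpace ℝ ι) ρ, ‖h‖ ^ 2 =
      ∫ h : EuclideanSpace ℝ ι, (Set.Iio ρ).indicator (· ^ 2) ‖h‖ := by
    rw [← integral_indicator measurableSet_ball]
    congr 1
    ext h
    by_cases hh : ‖h‖ < ρ <;> simp [Set.indicator, hh]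
  rw [hball, integral_fun_norm_addHaar, finrank_euclideanSpace, hradial, nsmul_eq_mul,
    smul_eq_mul, mul_assoc]

variable (ι) in
noncomputable def ballSecondMoment (ρ : ℝ) : ℝ :=
  volume.real (ball (0 : EuclideanSpace ℝ ι) 1) * (ρ ^ (Fintype.card ι + 2) / (Fintype.card ι + 2))

theorem integral_ball_coord_sq (j : ι) {ρ : ℝ} (hρ : 0 ≤ ρ) :
    ∫ h in ball (0 : EuclideanSpace ℝ ι) ρ, h j ^ 2 = ballSecondMoment ι ρ := by
  have : Nonempty ι := ⟨j⟩
  have hsum : ∫ h in ball (0 : EuclideanSpace ℝ ι) ρ, ‖h‖ ^ 2 =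
      Fintype.card ι * ∫ h in ball (0 : EuclideanSpace ℝ ι) ρ, h j ^ 2 := by
    simp_rw [EuclideanSpace.norm_sq_eq, Real.norm_eq_abs, sq_abs]
    rw [integral_finsetSum _ fun i _ =>
      ((EuclideanSpace.proj i).continuous.pow 2).integrableOn_ball 0 ρ]
    simp [integral_ball_coord_sq_eq _ j]
  rw [integral_ball_norm_sq hρ, mul_assoc] at hsum
  exact (mul_left_cancel₀ (by simp) hsum).symm

theorem integral_ball_coord_mul_coord [DecidableEq ι] (j k : ι) {ρ : ℝ} (hρ : 0 ≤ ρ) :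
    ∫ h in ball (0 : EuclideanSpace ℝ ι) ρ, h j * h k =
      if j = k then ballSecondMoment ι ρ else 0 := by
  split_ifs with hjk
  · subst hjk
    simp_rw [← sq]
    exact integral_ball_coord_sq j hρ
  · exact integral_ball_coord_mul_coord_of_ne hjk ρ

theorem integral_ball_dotProduct_mulVec (Q : Matrix ι ι ℝ) {ρ : ℝ} (hρ : 0 ≤ ρ) :
    ∫ h in ball (0 : EuclideanSpace ℝ ι) ρ, ofLp h ⬝ᵥ (Q *ᵥ ofLp h) =
      ballSecondMoment ι ρ * Q.trace := by
  classical
  have hterm (j k : ι) : Continuous fun h : EuclideanSpace ℝ ι => Q j k * (h j * h k) := by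
    fun_prop
  have hexpand (h : EuclideanSpace ℝ ι) :
      ofLp h ⬝ᵥ (Q *ᵥ ofLp h) = ∑ j, ∑ k, Q j k * (h j * h k) := by
    simp only [dotProduct, mulVec, Finset.mul_sum]
    exact Finset.sum_congr rfl fun j _ => Finset.sum_congr rfl fun k _ => by ring
  simp_rw [hexpand]
  rw [integral_finsetSum _ fun j _ =>
    (continuous_finsetSum _ fun k _ => hterm j k).integrableOn_ball 0 ρ]
  simp_rw [integral_finsetSum _ fun k _ => (hterm _ k).integrableOn_ball 0 ρ, integral_const_mul,
    integral_ball_coord_mul_coord _ _ hρ]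
  simp [Matrix.trace, Finset.mul_sum, mul_comm]

theorem norm_toLp_mulVec_sq {m : Type*} [Fintype m] (B : Matrix m ι ℝ) (h : EuclideanSpace ℝ ι) :
    ‖toLp 2 (B *ᵥ ofLp h)‖ ^ 2 = ofLp h ⬝ᵥ ((Bᵀ * B) *ᵥ ofLp h) := by
  rw [← real_inner_self_eq_norm_sq, EuclideanSpace.inner_eq_star_dotProduct,
    ← mulVec_mulVec, dotProduct_mulVec, vecMul_transpose]
  simp

theorem integral_ball_norm_add_toLp_mulVec_sq {m : Type*} [Fintype m] (c : EuclideanSpace ℝ m)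
    (B : Matrix m ι ℝ) {ρ : ℝ} (hρ : 0 ≤ ρ) :
    ∫ h in ball (0 : EuclideanSpace ℝ ι) ρ, ‖c + toLp 2 (B *ᵥ ofLp h)‖ ^ 2 =
      volume.real (ball (0 : EuclideanSpace ℝ ι) ρ) * ‖c‖ ^ 2 +
        ballSecondMoment ι ρ * (Bᵀ * B).trace := by
  have hcross :
      ∫ h in ball (0 : EuclideanSpace ℝ ι) ρ, 2 * inner ℝ c (toLp 2 (B *ᵥ ofLp h)) = 0 :=
    setIntegral_ball_eq_zero_of_odd (LinearIsometryEquiv.neg ℝ)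
      (fun h => by simp [mulVec_neg, inner_neg_right]) ρ
  simp_rw [norm_add_sq_real, norm_toLp_mulVec_sq]
  rw [integral_add, integral_add, hcross, integral_ball_dotProduct_mulVec _ hρ, setIntegral_const,
    smul_eq_mul, add_zero]
  all_goals exact Continuous.integrableOn_ball (by fun_prop) 0 ρ

end Moments

theorem ballSecondMoment_fin_three (ρ : ℝ) :
    ballSecondMoment (Fin 3) ρ = 4 * Real.pi * ρ ^ 5 / 15 := by
  simp only [ballSecondMoment, measureReal_def, EuclideanSpace.volume_ball_fin_three,
    ENNReal.toReal_mul, ENNReal.toReal_pow, ENNReal.toReal_ofReal zero_le_one,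
    ENNReal.toReal_ofReal (by positivity : 0 ≤ Real.pi * 4 / 3), Fintype.card_fin]
  push_cast
  ring

theorem mv_apply (Z : Matrix (Fin 3) (Fin 3) ℝ) (h : EuclideanSpace ℝ (Fin 3)) :
    mv Z h = toLp 2 (Z *ᵥ ofLp h) :=
  rfl

theorem integral_ball_norm_mv_residual_sq (A W : Matrix (Fin 3) (Fin 3) ℝ)
    (p t : EuclideanSpace ℝ (Fin 3)) {ρ : ℝ} (hρ : 0 ≤ ρ) :
    ∫ h in ball (0 : EuclideanSpace ℝ (Fin 3)) ρ, ‖p + mv A h - (mv W h + t)‖ ^ 2 =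
      volume.real (ball (0 : EuclideanSpace ℝ (Fin 3)) ρ) * ‖p - t‖ ^ 2 +
        4 * Real.pi * ρ ^ 5 / 15 * ((A - W)ᵀ * (A - W)).trace := by
  have hres (h : EuclideanSpace ℝ (Fin 3)) :
      p + mv A h - (mv W h + t) = (p - t) + toLp 2 ((A - W) *ᵥ ofLp h) := by
    simp only [mv_apply, sub_mulVec, toLp_sub]
    abel
  simp_rw [hres]
  rw [integral_ball_norm_add_toLp_mulVec_sq _ _ hρ, ballSecondMoment_fin_three]

theorem infinitesimal_rigid_best_approx (A W : Matrix (Fin 3) (Fin 3) ℝ)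
    (hW : Wᵀ = -W) (p t : EuclideanSpace ℝ (Fin 3)) (ρ : ℝ) (hρ : 0 < ρ) :
    (∫ h in Metric.ball (0 : EuclideanSpace ℝ (Fin 3)) ρ,
        ‖p + mv A h - (mv W h + t)‖ ^ 2)
      ≥ (4 * Real.pi * ρ ^ 5 / 15) * frob ((1 / 2 : ℝ) • (A + Aᵀ)) ^ 2 ∧
    ((∫ h in Metric.ball (0 : EuclideanSpace ℝ (Fin 3)) ρ,
        ‖p + mv A h - (mv W h + t)‖ ^ 2)
      = (4 * Real.pi * ρ ^ 5 / 15) * frob ((1 / 2 : ℝ) • (A + Aᵀ)) ^ 2 ↔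
        t = p ∧ W = (1 / 2 : ℝ) • (A - Aᵀ)) := by
  set S : Matrix (Fin 3) (Fin 3) ℝ := (1 / 2 : ℝ) • (A + Aᵀ)
  set T : Matrix (Fin 3) (Fin 3) ℝ := (1 / 2 : ℝ) • (A - Aᵀ) - W
  set V := volume.real (ball (0 : EuclideanSpace ℝ (Fin 3)) ρ)
  set κ : ℝ := 4 * Real.pi * ρ ^ 5 / 15
  have hS : S.IsSymm := by simp [S, IsSymm, add_comm]
  have hT : Tᵀ = -T := by
    simp only [T, transpose_sub, transpose_smul, transpose_transpose, hW]
    module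
  have hAW : A - W = S + T := by simp only [S, T]; module
  rw [integral_ball_norm_mv_residual_sq A W p t hρ.le, hAW,
    trace_transpose_mul_self_add_of_isSymm hS hT, ← frob_sq, mul_add, add_left_comm]
  have hV : 0 < V := ENNReal.toReal_pos (measure_ball_pos volume 0 hρ).ne' measure_ball_lt_top.ne
  have hκ : 0 < κ := by positivity
  have hTT : 0 ≤ (Tᵀ * T).trace := trace_transpose_mul_self_nonneg T
  have hgap : V * ‖p - t‖ ^ 2 + κ * (Tᵀ * T).trace = 0 ↔ t = p ∧ W = (1 / 2 : ℝ) • (A - Aᵀ) := by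
    rw [add_eq_zero_iff_of_nonneg (by positivity) (by positivity), mul_eq_zero, mul_eq_zero,
      trace_transpose_mul_self_eq_zero_iff]
    simp only [hV.ne', hκ.ne', false_or, T, sub_eq_zero, pow_eq_zero_iff two_ne_zero, norm_eq_zero]
    exact and_congr eq_comm eq_comm
  exact ⟨le_add_of_nonneg_right (by positivity), add_eq_left.trans hgap⟩
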